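/- Let p be a prime and let π ∈ ℤ[ω] where ω = (-1+√-3)/2 is a primitive cube root of unity. Then there exists π ∈ ℤ[ω] with π·π̄ = p and π + π̄ = ±1 if and only if there exists an integer u with p = 3u² + 3u + 1. -/
import Mathlib


/-- The Eisenstein unit `ω = (-1 + √-3)/2`, a primitive cube root of unity in `ℂ`. -/
noncomputable def eisensteinOmega : ℂ := (-1 + Real.sqrt 3 * Complex.I) / 2

lemma conj_omega : (starRingEnd ℂ) eisensteinOmega = (-1 - Real.sqrt 3 * Complex.I) / 2 := by
  simp only [eisensteinOmega, map_div₀, map_add, map_mul, map_neg, map_one, map_ofNat,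
    Complex.conj_I, Complex.conj_ofReal]
  ring

lemma trace_eq (a b : ℤ) :
    ((a:ℂ) + b * eisensteinOmega) + (starRingEnd ℂ) ((a:ℂ) + b * eisensteinOmega)
      = ((2*a - b : ℤ) : ℂ) := by
  simp only [map_add, map_mul, map_intCast, conj_omega]
  rw [eisensteinOmega]
  push_cast
  ring

lemma norm_eq (a b : ℤ) :
    ((a:ℂ) + b * eisensteinOmega) * (starRingEnd ℂ) ((a:ℂ) + b * eisensteinOmega)
      = ((a^2 - a*b + b^2 : ℤ) : ℂ) := by
  have hs : ((Real.sqrt 3 : ℝ) : ℂ)^2 = 3 := by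
    norm_cast
    exact Real.sq_sqrt (by norm_num)
  simp only [map_add, map_mul, map_intCast, conj_omega]
  rw [eisensteinOmega]
  push_cast
  field_simp
  ring_nf
  rw [Complex.I_sq]
  ring_nf
  rw [hs]
  ring

/-- For a prime `p`, there exists an Eisenstein integer `π = a + bω` with `π·π̄ = p` and
`π + π̄ = ±1` if and only if `p = 3u² + 3u + 1` for some integer `u`. -/
theorem eisenstein_trace_pm_one_iff (p : ℕ) (hp : p.Prime) :
    (∃ π : ℂ, (∃ a b : ℤ, π = (a : ℂ) + (b : ℂ) * eisensteinOmega) ∧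
      π * (starRingEnd ℂ) π = (p : ℂ) ∧
      (π + (starRingEnd ℂ) π = 1 ∨ π + (starRingEnd ℂ) π = -1)) ↔
    ∃ u : ℤ, (p : ℤ) = 3 * u ^ 2 + 3 * u + 1 := by
  constructor
  · rintro ⟨π, ⟨a, b, rfl⟩, hnorm, htr⟩
    rw [norm_eq] at hnorm
    have hn : a^2 - a*b + b^2 = (p : ℤ) := by exact_mod_cast hnorm
    rw [trace_eq] at htr
    rcases htr with h | h
    · have h1 : 2*a - b = 1 := by exact_mod_cast h
      exact ⟨a - 1, by nlinarith⟩
    · have h1 : 2*a - b = -1 := by exact_mod_cast h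
      exact ⟨a, by nlinarith⟩
  · rintro ⟨u, hu⟩
    refine ⟨(u : ℂ) + (2*u+1 : ℤ) * eisensteinOmega, ⟨u, 2*u+1, by push_cast; ring⟩, ?_, ?_⟩
    · rw [norm_eq]
      have : (u^2 - u*(2*u+1) + (2*u+1)^2 : ℤ) = (p : ℤ) := by rw [hu]; ring
      exact_mod_cast this
    · right
      rw [trace_eq]
      norm_num
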